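/- Let G be an abelian group and let B be a subgroup of G of finite rank and of positive rank (i.e. the Q-vector space B ⊗_Z Q is finite dimensional of positive dimension). Let A_1,…,A_n be subgroups of G and t_1,…,t_n ∈ G be elements such that the set B ∖ ⋃_{i=1}^n (t_i + A_i) is finite. Then B ∖ ⋃_{i=1}^n (t_i + A_i) is empty. -/
import Mathlib


/- STATEMENT 12:
Let `G` be an abelian group and `B ≤ G` a subgroup of finite positive rank
(i.e. `ℚ ⊗[ℤ] B` is a finite-dimensional `ℚ`-vector space of positive dimension).
If `A₁, …, Aₙ ≤ G` are subgroups and `t₁, …, tₙ ∈ G` are such that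
`B ∖ ⋃ᵢ (tᵢ + Aᵢ)` is finite, then this difference is empty. -/

open scoped TensorProduct Pointwise

/-- If every element of `B` is torsion, then `ℚ ⊗[ℤ] B` is trivial. -/
lemma aux_subsingleton {B : Type*} [AddCommGroup B]
    (h : ∀ b : B, ∃ m : ℤ, m ≠ 0 ∧ m • b = 0) :
    ∀ z : ℚ ⊗[ℤ] B, z = 0 := by
  intro z
  induction z using TensorProduct.induction_on with
  | zero => rfl
  | tmul q y =>
    obtain ⟨m, hm0, hmy⟩ := h y
    have hmQ : (m : ℚ) ≠ 0 := Int.cast_ne_zero.mpr hm0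
    have h1 : q ⊗ₜ[ℤ] y = (m • (q / (m : ℚ))) ⊗ₜ[ℤ] y := by
      congr 1
      rw [zsmul_eq_mul]
      field_simp
    rw [h1, TensorProduct.smul_tmul, hmy, TensorProduct.tmul_zero]
  | add a b ha hb => rw [ha, hb, add_zero]

theorem stmt_12 {G : Type*} [AddCommGroup G] (B : AddSubgroup G)
    (hfinrank : FiniteDimensional ℚ (ℚ ⊗[ℤ] B))
    (hposrank : 0 < Module.rank ℚ (ℚ ⊗[ℤ] B))
    (n : ℕ) (A : Fin n → AddSubgroup G) (t : Fin n → G)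
    (hfin : ((B : Set G) \ ⋃ i, (t i +ᵥ (A i : Set G))).Finite) :
    (B : Set G) \ ⋃ i, (t i +ᵥ (A i : Set G)) = ∅ := by
  classical
  by_contra hne
  obtain ⟨x, hxB, hxU⟩ := Set.nonempty_iff_ne_empty.mpr hne
  -- find a torsion-free element b of B
  have hb : ∃ b : B, ∀ m : ℤ, m ≠ 0 → m • b ≠ 0 := by
    by_contra hall
    push_neg at hall
    have hsub : ∀ z : ℚ ⊗[ℤ] B, z = 0 := aux_subsingleton fun b => hall b
    have : Subsingleton (ℚ ⊗[ℤ] B) := ⟨fun a b => by rw [hsub a, hsub b]⟩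
    rw [rank_subsingleton'] at hposrank
    exact lt_irrefl 0 hposrank
  obtain ⟨b, hbfree⟩ := hb
  have hbG : ∀ m : ℤ, m ≠ 0 → m • (b : G) ≠ 0 := by
    intro m hm h
    apply hbfree m hm
    ext
    simpa using h
  -- choose multipliers
  have hchoice : ∀ i : Fin n, ∃ m : ℤ, m ≠ 0 ∧
      ((∃ l : ℤ, l ≠ 0 ∧ l • (b : G) ∈ A i) → m • (b : G) ∈ A i) := by
    intro i
    by_cases hc : ∃ l : ℤ, l ≠ 0 ∧ l • (b : G) ∈ A i
    · obtain ⟨l, hl0, hlA⟩ := hc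
      exact ⟨l, hl0, fun _ => hlA⟩
    · exact ⟨1, one_ne_zero, fun h => absurd h hc⟩
  choose m hm0 hmA using hchoice
  set L : ℤ := ∏ i, m i with hL
  have hL0 : L ≠ 0 := Finset.prod_ne_zero_iff.mpr fun i _ => hm0 i
  set f : ℤ → G := fun k => x + (L * k) • (b : G) with hf
  have hinj : Function.Injective f := by
    intro k k' hkk'
    by_contra hne'
    apply hbG (L * (k - k')) (mul_ne_zero hL0 (sub_ne_zero.mpr hne'))
    have h1 : (L * k) • (b : G) = (L * k') • (b : G) := by
      have := hkk'
      simp only [hf] at this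
      exact add_left_cancel this
    rw [mul_sub, sub_smul, h1, sub_self]
  -- difference of f-values
  have hdiff : ∀ k k' : ℤ, f k - f k' = (L * (k - k')) • (b : G) := by
    intro k k'
    simp only [hf, mul_sub, sub_smul]
    abel
  -- each coset-preimage is finite
  have hpiece : ∀ i, {k : ℤ | f k ∈ t i +ᵥ (A i : Set G)}.Finite := by
    intro i
    by_cases hc : ∃ l : ℤ, l ≠ 0 ∧ l • (b : G) ∈ A i
    · -- the set is empty
      convert Set.finite_empty
      ext k
      simp only [Set.mem_setOf_eq, Set.mem_empty_iff_false, iff_false]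
      intro hk
      rw [Set.mem_vadd_set_iff_neg_vadd_mem] at hk
      have hkA : -t i + f k ∈ A i := hk
      -- (L*k) • b ∈ A i
      obtain ⟨c, hcL⟩ : m i ∣ L := Finset.dvd_prod_of_mem m (Finset.mem_univ i)
      have hLk : (L * k) • (b : G) ∈ A i := by
        have heq : (L * k) • (b : G) = (c * k) • (m i • (b : G)) := by
          rw [← mul_smul]
          congr 1
          rw [hcL]
          ring
        rw [heq]
        exact AddSubgroup.zsmul_mem _ (hmA i hc) _
      have hxA : -t i + x ∈ A i := by
        have := AddSubgroup.sub_mem _ hkA hLk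
        have heq : -t i + f k - (L * k) • (b : G) = -t i + x := by
          simp only [hf]
          abel
        rwa [heq] at this
      exact hxU (Set.mem_iUnion.mpr ⟨i, Set.mem_vadd_set_iff_neg_vadd_mem.mpr hxA⟩)
    · -- the set is a subsingleton
      apply Set.Subsingleton.finite
      intro k hk k' hk'
      rw [Set.mem_setOf_eq, Set.mem_vadd_set_iff_neg_vadd_mem] at hk hk'
      by_contra hne'
      push_neg at hc
      apply hc (L * (k - k')) (mul_ne_zero hL0 (sub_ne_zero.mpr hne'))
      rw [← hdiff k k']
      have := AddSubgroup.sub_mem _ hk hk'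
      simp only [vadd_eq_add] at this
      have heq : (-t i + f k) - (-t i + f k') = f k - f k' := by abel
      rwa [heq] at this
  -- all of ℤ is covered
  have hcover : (Set.univ : Set ℤ) ⊆
      (f ⁻¹' ((B : Set G) \ ⋃ i, (t i +ᵥ (A i : Set G)))) ∪
        ⋃ i, {k : ℤ | f k ∈ t i +ᵥ (A i : Set G)} := by
    intro k _
    by_cases h : f k ∈ ⋃ i, t i +ᵥ (A i : Set G)
    · right
      obtain ⟨i, hi⟩ := Set.mem_iUnion.mp h
      exact Set.mem_iUnion.mpr ⟨i, hi⟩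
    · left
      refine ⟨?_, h⟩
      exact AddSubgroup.add_mem B hxB (AddSubgroup.zsmul_mem B b.2 _)
  have hfinZ : (Set.univ : Set ℤ).Finite :=
    Set.Finite.subset ((hfin.preimage hinj.injOn).union (Set.finite_iUnion hpiece)) hcover
  exact Set.infinite_univ hfinZ
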